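/- Consider a single player i with strategy set X_i ⊆ ℝ^{m_i}, a continuously differentiable objective J_i : ℝ^m → ℝ, and conjecture maps γ_i^j(·;θ_{i,j}) : X_i → ℝ^{m_j}, θ_{i,j} ∈ Θ_{i,j}, differentiable in x_i and satisfying the expressivity condition: for all x_i ∈ X_i, x_j ∈ X_j and every matrix α ∈ ℝ^{m_j×m_i} there exists θ_{i,j} ∈ Θ_{i,j} with γ_i^j(x_i;θ_{i,j}) = x_j and ∇_{x_i}γ_i^j(x_i;θ_{i,j}) = α. Let x* ∈ ∏_k X_k be a target profile with ∇_{x_{-i}} J_i(x*) ≠ 0. Then the decentralized problem of player i admits a solution: there exist x̃_i ∈ X_i and θ̃_i = (θ̃_{i,j})_{j≠i} with θ̃_{i,j} ∈ Θ_{i,j} such that the total derivative of x_i ↦ J_i(x_i, γ_i^{-i}(x_i;θ̃_i)) vanishes at x̃_i and J_i(x̃_i, γ_i^{-i}(x̃_i;θ̃_i)) = J_i(x*). -/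

import Mathlib

/-- The profile conjectured by player `i` when it plays `y`: coordinate `i` is `y` itself
and coordinate `j ≠ i` is the conjectured strategy `γ i j y (θ j)` of player `j`. -/
noncomputable def conjProfile {N d : ℕ} {m : Fin N → ℕ}
    (γ : (i j : Fin N) → EuclideanSpace ℝ (Fin (m i)) → EuclideanSpace ℝ (Fin d) →
      EuclideanSpace ℝ (Fin (m j)))
    (θ : (j : Fin N) → EuclideanSpace ℝ (Fin d)) (i : Fin N)
    (y : EuclideanSpace ℝ (Fin (m i))) : (k : Fin N) → EuclideanSpace ℝ (Fin (m k)) :=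
  Function.update
    (fun j : Fin N =>
      if _h : j = i then (0 : EuclideanSpace ℝ (Fin (m j)))
      else γ i j y (θ j)) i y

/-!
Take `x̃_i = x*_i` and conjectures that reproduce `x*_j` at `x*_i`, so the conjectured value is
`J(x*)`. By the chain rule the conjectured derivative at `x*_i` is
`∂_i J(x*) + ∑_{k ≠ i} ∂_k J(x*) ∘ α_k`, with `α_k` the Jacobian of `γ_i^k`. For some `j ≠ i` the
functional `∂_j J(x*)` is nonzero, so postcomposition with it is onto: choose `α_j` with
`∂_j J(x*) ∘ α_j = -∂_i J(x*)` and all other `α_k = 0`. Expressivity realizes these values and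
Jacobians.
-/

open Function ContinuousLinearMap

theorem ContinuousLinearMap.exists_comp_eq_of_ne_zero {𝕜 F G : Type*} [NontriviallyNormedField 𝕜]
    [NormedAddCommGroup F] [NormedSpace 𝕜 F] [NormedAddCommGroup G] [NormedSpace 𝕜 G]
    {ℓ : F →L[𝕜] 𝕜} (hℓ : ℓ ≠ 0) (g : G →L[𝕜] 𝕜) : ∃ α : G →L[𝕜] F, ℓ.comp α = g := by
  obtain ⟨v, hv⟩ := DFunLike.ne_iff.mp hℓ
  refine ⟨g.smulRight ((ℓ v)⁻¹ • v), ?_⟩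
  ext h
  simp [inv_mul_cancel₀ hv]

section Pi

variable {𝕜 ι : Type*} [NontriviallyNormedField 𝕜] [DecidableEq ι]
  {E : ι → Type*} [∀ k, NormedAddCommGroup (E k)] [∀ k, NormedSpace 𝕜 (E k)]
  {F : Type*} [NormedAddCommGroup F] [NormedSpace 𝕜 F]

theorem ContinuousLinearMap.pi_single_id (k : ι) :
    pi (Pi.single k (ContinuousLinearMap.id 𝕜 (E k))) = single 𝕜 E k := by
  ext v l
  rcases eq_or_ne l k with rfl | hlk
  · simp
  · simp [hlk]

theorem HasFDerivAt.comp_update [Fintype ι] {J : (∀ k, E k) → F} {L : (∀ k, E k) →L[𝕜] F}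
    {x : ∀ k, E k} (hJ : HasFDerivAt J L x) (k : ι) :
    HasFDerivAt (fun y => J (update x k y)) (L.comp (single 𝕜 E k)) (x k) := by
  rw [← pi_single_id]
  have hJ' : HasFDerivAt J L (update x k (x k)) := by rwa [update_eq_self]
  exact hJ'.comp (x k) (hasFDerivAt_update x (x k))

theorem ContinuousLinearMap.pi_update_single {i j : ι} (hij : i ≠ j) (α : E i →L[𝕜] E j) :
    pi (update (Pi.single (M := fun k => E i →L[𝕜] E k) j α) i (ContinuousLinearMap.id 𝕜 (E i)))
      = single 𝕜 E i + (single 𝕜 E j).comp α := by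
  ext v l
  rcases eq_or_ne l i with rfl | hli
  · simp [hij]
  · rcases eq_or_ne l j with rfl | hlj
    · simp [hli]
    · simp [hli, hlj]

theorem ContinuousLinearMap.exists_comp_pi_update_single_eq_zero
    (L : (∀ k, E k) →L[𝕜] 𝕜) {i j : ι} (hij : i ≠ j) (hj : L.comp (single 𝕜 E j) ≠ 0) :
    ∃ α : E i →L[𝕜] E j, L.comp
      (pi (update (Pi.single (M := fun k => E i →L[𝕜] E k) j α) i
        (ContinuousLinearMap.id 𝕜 (E i)))) = 0 := by
  obtain ⟨α, hα⟩ := exists_comp_eq_of_ne_zero hj (-L.comp (single 𝕜 E i))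
  refine ⟨α, ?_⟩
  rw [pi_update_single hij, comp_add, ← comp_assoc, hα, add_neg_cancel]

end Pi

section ConjProfile

variable {N d : ℕ} {m : Fin N → ℕ}
  {γ : (i j : Fin N) → EuclideanSpace ℝ (Fin (m i)) → EuclideanSpace ℝ (Fin d) →
    EuclideanSpace ℝ (Fin (m j))}
  {θ : (j : Fin N) → EuclideanSpace ℝ (Fin d)} {i : Fin N}

theorem conjProfile_apply_of_ne (y : EuclideanSpace ℝ (Fin (m i))) {j : Fin N} (hj : j ≠ i) :
    conjProfile γ θ i y j = γ i j y (θ j) := by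
  simp [conjProfile, hj]

theorem conjProfile_eq_self {x : (k : Fin N) → EuclideanSpace ℝ (Fin (m k))}
    (hx : ∀ j, j ≠ i → γ i j (x i) (θ j) = x j) : conjProfile γ θ i (x i) = x := by
  ext1 j
  rcases eq_or_ne j i with rfl | hj
  · simp [conjProfile]
  · rw [conjProfile_apply_of_ne _ hj, hx j hj]

theorem hasFDerivAt_conjProfile {y : EuclideanSpace ℝ (Fin (m i))}
    {A : (j : Fin N) → EuclideanSpace ℝ (Fin (m i)) →L[ℝ] EuclideanSpace ℝ (Fin (m j))}
    (hA : ∀ j, j ≠ i → HasFDerivAt (fun z => γ i j z (θ j)) (A j) y) :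
    HasFDerivAt (conjProfile γ θ i)
      (pi (update A i (ContinuousLinearMap.id ℝ (EuclideanSpace ℝ (Fin (m i)))))) y := by
  refine hasFDerivAt_pi.2 fun j => ?_
  rcases eq_or_ne j i with rfl | hj
  · convert hasFDerivAt_id (𝕜 := ℝ) y using 1 <;> ext <;> simp [conjProfile]
  · simpa [conjProfile_apply_of_ne _ hj, hj] using hA j hj

end ConjProfile

/-- Proposition 4 of the paper, decentralized conjecture design: given a
target profile `x*` with nonzero partial gradient `∇_{x_{-i}} J_i(x*) ≠ 0`, and an
expressive conjecture class, player `i` can find a strategy `x̃_i ∈ X_i` and conjecture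
parameters `θ̃_{i,j} ∈ Θ_{i,j}` such that its conjectured objective is stationary at
`x̃_i` and its conjectured value there equals the communicated target `J_i(x*)`. -/
theorem decentralized_design_has_solution (N d : ℕ) (m : Fin N → ℕ)
    (X : ∀ i : Fin N, Set (EuclideanSpace ℝ (Fin (m i))))
    (Θ : Fin N → Fin N → Set (EuclideanSpace ℝ (Fin d)))
    (i : Fin N)
    (J : ((k : Fin N) → EuclideanSpace ℝ (Fin (m k))) → ℝ)
    (hJ : ContDiff ℝ 1 J)
    (γ : (i j : Fin N) → EuclideanSpace ℝ (Fin (m i)) → EuclideanSpace ℝ (Fin d) →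
      EuclideanSpace ℝ (Fin (m j)))
    (hγdiff : ∀ j : Fin N, j ≠ i → ∀ θij : EuclideanSpace ℝ (Fin d),
      Differentiable ℝ (fun y => γ i j y θij))
    -- expressivity of the conjecture class of player `i`
    (hexpr : ∀ j : Fin N, j ≠ i → ∀ xi ∈ X i, ∀ xj ∈ X j,
      ∀ α : EuclideanSpace ℝ (Fin (m i)) →L[ℝ] EuclideanSpace ℝ (Fin (m j)),
      ∃ θij ∈ Θ i j, γ i j xi θij = xj ∧ fderiv ℝ (fun y => γ i j y θij) xi = α)
    -- the target profile, feasible and with nonzero partial gradient `∇_{x_{-i}} J(x*)`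
    (xstar : (k : Fin N) → EuclideanSpace ℝ (Fin (m k)))
    (hxstar : ∀ k, xstar k ∈ X k)
    (hgrad : ∃ j : Fin N, j ≠ i ∧
      fderiv ℝ (fun y : EuclideanSpace ℝ (Fin (m j)) =>
        J (Function.update xstar j y)) (xstar j) ≠ 0) :
    ∃ xtilde ∈ X i, ∃ θtilde : (j : Fin N) → EuclideanSpace ℝ (Fin d),
      (∀ j : Fin N, j ≠ i → θtilde j ∈ Θ i j) ∧
      fderiv ℝ (fun y : EuclideanSpace ℝ (Fin (m i)) =>
        J (conjProfile γ θtilde i y)) xtilde = 0 ∧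
      J (conjProfile γ θtilde i xtilde) = J xstar := by
  obtain ⟨j, hji, hpartial⟩ := hgrad
  have hL := (hJ.differentiable one_ne_zero xstar).hasFDerivAt
  obtain ⟨α, hα⟩ := exists_comp_pi_update_single_eq_zero _ hji.symm
    ((hL.comp_update j).fderiv ▸ hpartial)
  -- quantified over all `k` so that `choose` yields a total parameter family
  have hθ : ∀ k, ∃ θk, k ≠ i → θk ∈ Θ i k ∧ γ i k (xstar i) θk = xstar k ∧
      fderiv ℝ (fun y => γ i k y θk) (xstar i) =
        Pi.single (M := fun k => EuclideanSpace ℝ (Fin (m i)) →L[ℝ] EuclideanSpace ℝ (Fin (m k)))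
          j α k := by
    intro k
    by_cases hk : k = i
    · exact ⟨0, fun hk' => absurd hk hk'⟩
    · obtain ⟨θk, hθk⟩ := hexpr k hk _ (hxstar i) _ (hxstar k) _
      exact ⟨θk, fun _ => hθk⟩
  choose θ hθ using hθ
  have hx : conjProfile γ θ i (xstar i) = xstar := conjProfile_eq_self fun k hk => (hθ k hk).2.1
  have hF := hasFDerivAt_conjProfile fun k hk =>
    (hθ k hk).2.2 ▸ (hγdiff k hk (θ k) (xstar i)).hasFDerivAt
  refine ⟨xstar i, hxstar i, θ, fun k hk => (hθ k hk).1, ?_, by rw [hx]⟩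
  have hL' : HasFDerivAt J (fderiv ℝ J xstar) (conjProfile γ θ i (xstar i)) := by rwa [hx]
  rw [← hα]
  exact (hL'.comp (xstar i) hF).fderiv
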